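/- Let ℓ ≥ 24 be an integer. Take the complete bipartite graph K_{ℓ,ℓ} with bipartition (A, B); add three more edges joining three disjoint pairs of vertices in A; then subdivide every edge between A and B exactly once, and subdivide each of the three additional edges either two or four times (the choices for the three edges being arbitrary and possibly different). The resulting graph has a hole of length exactly ℓ. -/

import Mathlib

open SimpleGraph

/-- `G` has a hole (induced cycle of length at least 4) of length `n`. -/
def HasHole {V : Type*} (G : SimpleGraph V) (n : ℕ) : Prop :=
  4 ≤ n ∧ Nonempty (cycleGraph n ↪g G)

/-- Vertices of the graph obtained from `K_{ℓ,ℓ}` with bipartition `(A, B)`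
(the two copies of `Fin ℓ`), after subdividing each `A`-`B` edge once (giving the
vertices `Fin ℓ × Fin ℓ`) and adding, for `j : Fin 3`, a path of `s j` new vertices
joining a pair of vertices of `A`. -/
abbrev SubdivVtx (ℓ : ℕ) (s : Fin 3 → ℕ) : Type :=
  (Fin ℓ ⊕ Fin ℓ) ⊕ ((Fin ℓ × Fin ℓ) ⊕ (Σ j : Fin 3, Fin (s j)))

/-- The basic adjacency relation of the construction: for `j : Fin 3`, the pair
`x j, y j` of vertices of `A` is joined by a path through the `s j` new vertices
`⟨j, 0⟩, …, ⟨j, s j - 1⟩`; each subdivision vertex `(a, b)` is joined to `a ∈ A`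
and `b ∈ B`. -/
def subdivRel (ℓ : ℕ) (s : Fin 3 → ℕ) (x y : Fin 3 → Fin ℓ) :
    SubdivVtx ℓ s → SubdivVtx ℓ s → Prop
  | Sum.inl (Sum.inl a), Sum.inr (Sum.inl p) => p.1 = a
  | Sum.inl (Sum.inr b), Sum.inr (Sum.inl p) => p.2 = b
  | Sum.inl (Sum.inl a), Sum.inr (Sum.inr ⟨j, i⟩) =>
      (a = x j ∧ (i : ℕ) = 0) ∨ (a = y j ∧ (i : ℕ) = s j - 1)
  | Sum.inr (Sum.inr ⟨j, i⟩), Sum.inr (Sum.inr ⟨j', i'⟩) =>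
      j = j' ∧ (i : ℕ) + 1 = (i' : ℕ)
  | _, _ => False

/-!
Every edge of this graph has an end of degree at most two (a subdivision vertex or an inner
vertex of an extra path), so every cycle is induced: a chord at such an end would be a third
neighbour. It remains to find a cycle of length `ℓ`. A detour `A → B → A` through the subdivided
`K_{ℓ,ℓ}` has length 4, while the extra paths have lengths 3 and 5, that is `∓1` modulo 4.
If `4 ∣ ℓ`, detours alone close up to the cycle. Otherwise some nonempty set of extra paths has
total length `≡ ℓ` modulo 4 (pigeonhole if `ℓ ≡ 2`, one path or all three if `ℓ` is odd); chain
these paths by detours through fresh `B`-vertices and close the cycle by a zigzag of detours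
through fresh `A`- and `B`-vertices.
-/

theorem Set.encard_le_two_of_subset_pair {α : Type*} {S : Set α} {a b : α} (h : S ⊆ {a, b}) :
    S.encard ≤ 2 :=
  (Set.encard_le_encard h).trans <| (Set.encard_insert_le _ _).trans <| by
    rw [Set.encard_singleton]; rfl

theorem Fin.exists_notMem_of_card_lt {n : ℕ} {S : Finset (Fin n)} (h : S.card < n) :
    ∃ b, b ∉ S := by
  obtain ⟨b, -, hb⟩ := Finset.exists_mem_notMem_of_card_lt_card (s := S) (t := Finset.univ)
    (by rwa [Finset.card_univ, Fintype.card_fin])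
  exact ⟨b, hb⟩

namespace SimpleGraph

variable {V : Type*} {G : SimpleGraph V}

theorem isIndContained_cycleGraph_of_isContained {n : ℕ} (hn : 3 ≤ n)
    (hG : ∀ ⦃v w⦄, G.Adj v w → (G.neighborSet v).encard ≤ 2 ∨ (G.neighborSet w).encard ≤ 2)
    (h : cycleGraph n ⊑ G) : cycleGraph n ⊴ G := by
  obtain ⟨f⟩ := h
  obtain ⟨m, rfl⟩ : ∃ m, n = m + 3 := ⟨n - 3, by omega⟩
  have key : ∀ i j, (G.neighborSet (f j)).encard ≤ 2 → G.Adj (f i) (f j) →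
      (cycleGraph (m + 3)).Adj i j := by
    intro i j hdeg hij
    have hsub : f '' (cycleGraph (m + 3)).neighborSet j ⊆ G.neighborSet (f j) := by
      rintro _ ⟨k, hk, rfl⟩
      exact f.toHom.map_adj hk
    have hcard : (f '' (cycleGraph (m + 3)).neighborSet j).encard = 2 := by
      rw [(show Function.Injective f from f.injective).encard_image, ← coe_neighborFinset,
        Set.encard_coe_eq_coe_finsetCard, card_neighborFinset_eq_degree,
        cycleGraph_degree_three_le]
      rfl
    have heq := (Set.toFinite _).eq_of_subset_of_encard_le hsub (hcard ▸ hdeg)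
    obtain ⟨k, hk, hki⟩ := heq.symm.subset hij.symm
    exact (f.injective hki ▸ hk).symm
  refine ⟨⟨f.toEmbedding, fun {i j} => ⟨fun hij => ?_, f.toHom.map_adj⟩⟩⟩
  rcases hG hij with hi | hj
  · exact (key j i hi hij.symm).symm
  · exact key i j hj hij

namespace Walk

variable {u v w : V}

theorem IsPath.start_notMem_support_tail {p : G.Walk u v} (hp : p.IsPath) :
    u ∉ p.support.tail := by
  have h := hp.support_nodup
  rw [← cons_tail_support p, List.nodup_cons] at h
  exact h.1

theorem IsPath.append {p : G.Walk u v} {q : G.Walk v w} (hp : p.IsPath) (hq : q.IsPath)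
    (h : ∀ z ∈ p.support, z ∈ q.support → z = v) : (p.append q).IsPath := by
  rw [isPath_def, support_append, List.nodup_append]
  refine ⟨hp.support_nodup, hq.support_nodup.sublist (List.tail_sublist _),
    fun z hzp z' hzq hzz => ?_⟩
  subst hzz
  rw [h z hzp (List.mem_of_mem_tail hzq)] at hzq
  exact hq.start_notMem_support_tail hzq

end Walk

end SimpleGraph

namespace SubdivVtx

variable {ℓ : ℕ} {s : Fin 3 → ℕ}

abbrev vA (a : Fin ℓ) : SubdivVtx ℓ s := .inl (.inl a)
abbrev vB (b : Fin ℓ) : SubdivVtx ℓ s := .inl (.inr b)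
abbrev vAB (a b : Fin ℓ) : SubdivVtx ℓ s := .inr (.inl (a, b))
abbrev vP (j : Fin 3) (i : Fin (s j)) : SubdivVtx ℓ s := .inr (.inr ⟨j, i⟩)

/-- `v` lies in the part of the graph spanned by the `A`-vertices in `SA`, the `B`-vertices in
`SB` and the extra paths indexed by `SJ`; a subdivision vertex is counted by its `B`-end only. -/
def Within (SA SB : Finset (Fin ℓ)) (SJ : Finset (Fin 3)) : SubdivVtx ℓ s → Prop
  | .inl (.inl a) => a ∈ SA
  | .inl (.inr b) => b ∈ SB
  | .inr (.inl (_, b)) => b ∈ SB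
  | .inr (.inr ⟨j, _⟩) => j ∈ SJ

variable {SA SB SA' SB' : Finset (Fin ℓ)} {SJ SJ' : Finset (Fin 3)} {v : SubdivVtx ℓ s}

theorem Within.mono (h : v.Within SA SB SJ) (hA : SA ⊆ SA') (hB : SB ⊆ SB') (hJ : SJ ⊆ SJ') :
    v.Within SA' SB' SJ' := by
  rcases v with (a | b) | (⟨a, b⟩ | ⟨j, i⟩)
  exacts [hA h, hB h, hB h, hJ h]

theorem Within.exists_eq_vA (h : v.Within SA SB SJ) (h' : v.Within SA' SB' SJ')
    (hB : Disjoint SB SB') (hJ : Disjoint SJ SJ') : ∃ a ∈ SA ∩ SA', v = vA a := by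
  rcases v with (a | b) | (⟨a, b⟩ | ⟨j, i⟩)
  · exact ⟨a, Finset.mem_inter.mpr ⟨h, h'⟩, rfl⟩
  · exact absurd h' (Finset.disjoint_left.mp hB h)
  · exact absurd h' (Finset.disjoint_left.mp hB h)
  · exact absurd h' (Finset.disjoint_left.mp hJ h)

end SubdivVtx

open SubdivVtx

abbrev subdivGraph (ℓ : ℕ) (s : Fin 3 → ℕ) (x y : Fin 3 → Fin ℓ) : SimpleGraph (SubdivVtx ℓ s) :=
  SimpleGraph.fromRel (subdivRel ℓ s x y)

namespace subdivGraph

variable {ℓ : ℕ} {s : Fin 3 → ℕ} {x y : Fin 3 → Fin ℓ}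

theorem neighborSet_vAB_subset (a b : Fin ℓ) :
    (subdivGraph ℓ s x y).neighborSet (vAB a b) ⊆ {vA a, vB b} := by
  rintro ((a' | b') | (⟨a', b'⟩ | ⟨j, i⟩)) h <;> simp [subdivRel] at h ⊢ <;> simp [h]

theorem neighborSet_vP_subset (j : Fin 3) (i : Fin (s j)) :
    (subdivGraph ℓ s x y).neighborSet (vP j i) ⊆
      {if (i : ℕ) = 0 then vA (x j) else vP j ⟨i - 1, by omega⟩,
       if h : (i : ℕ) + 1 = s j then vA (y j) else vP j ⟨i + 1, by omega⟩} := by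
  rintro ((a' | b') | (⟨a', b'⟩ | ⟨j', i'⟩)) h <;> simp [subdivRel] at h ⊢
  · rcases h with ⟨rfl, h0⟩ | ⟨rfl, h1⟩
    · exact Or.inl (by rw [if_pos h0])
    · exact Or.inr (by rw [dif_pos (by omega)])
  · obtain ⟨-, ⟨rfl, h⟩ | ⟨rfl, h⟩⟩ := h
    · exact Or.inr (by rw [dif_neg (by omega)]; simp [h])
    · exact Or.inl (by rw [if_neg (by omega)]; simp [Fin.ext_iff]; omega)

theorem not_adj_inl_inl (v w : Fin ℓ ⊕ Fin ℓ) :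
    ¬ (subdivGraph ℓ s x y).Adj (.inl v) (.inl w) := by
  rcases v with a | b <;> rcases w with a' | b' <;> simp [subdivRel]

theorem encard_neighborSet_inr_le_two (v : (Fin ℓ × Fin ℓ) ⊕ (Σ j : Fin 3, Fin (s j))) :
    ((subdivGraph ℓ s x y).neighborSet (.inr v)).encard ≤ 2 := by
  rcases v with ⟨a, b⟩ | ⟨j, i⟩
  · exact Set.encard_le_two_of_subset_pair (neighborSet_vAB_subset a b)
  · exact Set.encard_le_two_of_subset_pair (neighborSet_vP_subset j i)

theorem encard_neighborSet_le_two_of_adj ⦃v w : SubdivVtx ℓ s⦄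
    (h : (subdivGraph ℓ s x y).Adj v w) :
    ((subdivGraph ℓ s x y).neighborSet v).encard ≤ 2 ∨
      ((subdivGraph ℓ s x y).neighborSet w).encard ≤ 2 := by
  rcases v with v | v
  · rcases w with w | w
    · exact absurd h (not_adj_inl_inl v w)
    · exact Or.inr (encard_neighborSet_inr_le_two w)
  · exact Or.inl (encard_neighborSet_inr_le_two v)

variable {SA SB SA' SB' : Finset (Fin ℓ)} {SJ SJ' : Finset (Fin 3)}

def IsPathWithin {u v : SubdivVtx ℓ s} (p : (subdivGraph ℓ s x y).Walk u v)
    (SA SB : Finset (Fin ℓ)) (SJ : Finset (Fin 3)) : Prop :=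
  p.IsPath ∧ ∀ z ∈ p.support, z.Within SA SB SJ

theorem IsPathWithin.mono {u v : SubdivVtx ℓ s} {p : (subdivGraph ℓ s x y).Walk u v}
    (hp : IsPathWithin p SA SB SJ) (hA : SA ⊆ SA') (hB : SB ⊆ SB') (hJ : SJ ⊆ SJ') :
    IsPathWithin p SA' SB' SJ' :=
  ⟨hp.1, fun z hz => (hp.2 z hz).mono hA hB hJ⟩

theorem IsPathWithin.append {a b c : Fin ℓ} {p : (subdivGraph ℓ s x y).Walk (vA a) (vA b)}
    {q : (subdivGraph ℓ s x y).Walk (vA b) (vA c)} (hp : IsPathWithin p SA SB SJ)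
    (hq : IsPathWithin q SA' SB' SJ') (hA : SA ∩ SA' ⊆ {b}) (hB : Disjoint SB SB')
    (hJ : Disjoint SJ SJ') : IsPathWithin (p.append q) (SA ∪ SA') (SB ∪ SB') (SJ ∪ SJ') := by
  refine ⟨hp.1.append hq.1 fun z hzp hzq => ?_, fun z hz => ?_⟩
  · obtain ⟨d, hd, rfl⟩ := (hp.2 z hzp).exists_eq_vA (hq.2 z hzq) hB hJ
    rw [Finset.mem_singleton.mp (hA hd)]
  · rcases (Walk.mem_support_append_iff p q).mp hz with hz | hz
    · exact (hp.2 z hz).mono Finset.subset_union_left Finset.subset_union_left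
        Finset.subset_union_left
    · exact (hq.2 z hz).mono Finset.subset_union_right Finset.subset_union_right
        Finset.subset_union_right

theorem IsPathWithin.isCycle_append {a b : Fin ℓ} {p : (subdivGraph ℓ s x y).Walk (vA a) (vA b)}
    {q : (subdivGraph ℓ s x y).Walk (vA b) (vA a)} (hp : IsPathWithin p SA SB SJ)
    (hq : IsPathWithin q SA' SB' SJ') (hA : SA ∩ SA' ⊆ {a, b}) (hB : Disjoint SB SB')
    (hJ : Disjoint SJ SJ') (hq1 : 1 < q.length) : (p.append q).IsCycle := by
  refine hp.1.isCycle_append hq.1 (fun z hzp hzq => ?_) (Or.inr hq1)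
  obtain ⟨d, hd, rfl⟩ := (hp.2 z (List.mem_of_mem_tail hzp)).exists_eq_vA
    (hq.2 z (List.mem_of_mem_tail hzq)) hB hJ
  rcases Finset.mem_insert.mp (hA hd) with rfl | hd
  · exact hp.1.start_notMem_support_tail hzp
  · rw [Finset.mem_singleton.mp hd] at hzq
    exact hq.1.start_notMem_support_tail hzq

theorem exists_hop {a a' : Fin ℓ} (b : Fin ℓ) (h : a ≠ a') :
    ∃ p : (subdivGraph ℓ s x y).Walk (vA a) (vA a'), p.length = 4 ∧
      IsPathWithin p {a, a'} {b} ∅ := by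
  refine ⟨.cons (v := vAB a b) (by simp [subdivRel]) <| .cons (v := vB b) (by simp [subdivRel]) <|
    .cons (v := vAB a' b) (by simp [subdivRel]) <| .cons (by simp [subdivRel]) .nil, rfl, ?_, ?_⟩
  · simp [Walk.isPath_def, h]
  · simp [Within]

theorem exists_grid_path (k : ℕ) (hk : 1 ≤ k) {a a' : Fin ℓ} (h : a ≠ a')
    {SA SB : Finset (Fin ℓ)} (hA : SA.card + k + 1 ≤ ℓ) (hB : SB.card + k ≤ ℓ) :
    ∃ (p : (subdivGraph ℓ s x y).Walk (vA a) (vA a')) (SA' SB' : Finset (Fin ℓ)),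
      p.length = 4 * k ∧ IsPathWithin p SA' SB' ∅ ∧ SA' ∩ SA ⊆ {a, a'} ∧ Disjoint SB' SB := by
  induction k, hk using Nat.le_induction generalizing a SA SB with
  | base =>
    obtain ⟨b, hb⟩ := Fin.exists_notMem_of_card_lt (S := SB) (by omega)
    obtain ⟨p, hlen, hp⟩ := exists_hop (s := s) (x := x) (y := y) b h
    exact ⟨p, {a, a'}, {b}, hlen, hp, Finset.inter_subset_left,
      Finset.disjoint_singleton_left.mpr hb⟩
  | succ k hk ih =>
    obtain ⟨a₁, ha₁⟩ := Fin.exists_notMem_of_card_lt (S := insert a (insert a' SA)) <| by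
      have := Finset.card_insert_le a (insert a' SA)
      have := Finset.card_insert_le a' SA
      omega
    simp only [Finset.mem_insert, not_or] at ha₁
    obtain ⟨b, hb⟩ := Fin.exists_notMem_of_card_lt (S := SB) (by omega)
    obtain ⟨p, hlen, hp⟩ := exists_hop (s := s) (x := x) (y := y) b (Ne.symm ha₁.1)
    obtain ⟨q, SA', SB', hqlen, hq, hqA, hqB⟩ := ih ha₁.2.1 (SA := insert a SA)
      (SB := insert b SB) (by grind [Finset.card_insert_le]) (by grind [Finset.card_insert_le])
    refine ⟨p.append q, {a, a₁} ∪ SA', {b} ∪ SB', by simp [hlen, hqlen]; ring,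
      hp.append hq ?_ ?_ (Finset.disjoint_empty_left _), ?_, ?_⟩
    · intro c hc
      have := @hqA c
      simp only [Finset.mem_inter, Finset.mem_insert, Finset.mem_singleton] at hc this ⊢
      grind
    · exact Finset.disjoint_singleton_left.mpr fun hb' =>
        Finset.disjoint_left.mp hqB hb' (Finset.mem_insert_self b SB)
    · intro c hc
      have := @hqA c
      simp only [Finset.mem_inter, Finset.mem_union, Finset.mem_insert,
        Finset.mem_singleton] at hc this ⊢
      grind
    · exact Finset.disjoint_union_left.mpr ⟨Finset.disjoint_singleton_left.mpr hb,
        hqB.mono_right (Finset.subset_insert b SB)⟩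

theorem exists_path_vP_to_vA (j : Fin 3) (m : ℕ) (i : Fin (s j)) (hi : (i : ℕ) + 1 + m = s j) :
    ∃ p : (subdivGraph ℓ s x y).Walk (vP j i) (vA (y j)), p.IsPath ∧ p.length = m + 1 ∧
      ∀ z ∈ p.support, z = vA (y j) ∨ ∃ i' : Fin (s j), i ≤ i' ∧ z = vP j i' := by
  induction m generalizing i with
  | zero =>
    refine ⟨.cons (by simp [subdivRel]; omega) .nil, by simp [Walk.isPath_def], rfl, ?_⟩
    simp only [Walk.support_cons, Walk.support_nil, List.mem_cons, List.not_mem_nil, or_false]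
    rintro z (rfl | rfl)
    exacts [Or.inr ⟨i, le_rfl, rfl⟩, Or.inl rfl]
  | succ m ih =>
    obtain ⟨p, hp, hlen, hsupp⟩ := ih ⟨i + 1, by omega⟩ (by simp only; omega)
    have hadj : (subdivGraph ℓ s x y).Adj (vP j i) (vP j ⟨i + 1, by omega⟩) := by
      simp [subdivRel, Fin.ext_iff]
    refine ⟨.cons hadj p, (Walk.cons_isPath_iff _ _).mpr ⟨hp, fun hmem => ?_⟩, by simp [hlen], ?_⟩
    · rcases hsupp _ hmem with h | ⟨i', hi', h⟩
      · simp at h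
      · simp only [Sum.inr.injEq, Sigma.mk.injEq, heq_eq_eq, true_and] at h
        rw [← h, Fin.le_def] at hi'
        simp at hi'
    · simp only [Walk.support_cons, List.mem_cons]
      rintro z (rfl | hz)
      · exact Or.inr ⟨i, le_rfl, rfl⟩
      · rcases hsupp z hz with h | ⟨i', hi', h⟩
        · exact Or.inl h
        · refine Or.inr ⟨i', ?_, h⟩
          rw [Fin.le_def] at hi' ⊢
          simp only at hi'
          omega

theorem exists_extra_path (j : Fin 3) (hs : 1 ≤ s j) (hxy : x j ≠ y j) :
    ∃ p : (subdivGraph ℓ s x y).Walk (vA (x j)) (vA (y j)), p.length = s j + 1 ∧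
      IsPathWithin p {x j, y j} ∅ {j} := by
  obtain ⟨p, hp, hlen, hsupp⟩ := exists_path_vP_to_vA (x := x) j (s j - 1) ⟨0, hs⟩ (by simp; omega)
  have hadj : (subdivGraph ℓ s x y).Adj (vA (x j)) (vP j ⟨0, hs⟩) := by simp [subdivRel]
  refine ⟨.cons hadj p, by simp only [Walk.length_cons]; omega,
    (Walk.cons_isPath_iff _ _).mpr ⟨hp, fun hmem => ?_⟩, ?_⟩
  · rcases hsupp _ hmem with h | ⟨i', -, h⟩
    · exact hxy (by simpa using h)
    · simp at h
  · simp only [Walk.support_cons, List.mem_cons]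
    rintro z (rfl | hz)
    · simp [Within]
    · rcases hsupp z hz with rfl | ⟨i', -, rfl⟩ <;> simp [Within]

variable (x y) in
def extraEnds (J : Finset (Fin 3)) : Finset (Fin ℓ) := J.biUnion fun j => {x j, y j}

theorem extraEnds_cons {J : Finset (Fin 3)} {j : Fin 3} (hj : j ∉ J) :
    extraEnds x y (J.cons j hj) = {x j, y j} ∪ extraEnds x y J := by
  rw [extraEnds, Finset.cons_eq_insert, Finset.biUnion_insert, extraEnds]

theorem card_extraEnds_le (J : Finset (Fin 3)) : (extraEnds x y J).card ≤ 2 * J.card := by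
  rw [mul_comm]
  exact Finset.card_biUnion_le_card_mul J _ 2 fun j _ => Finset.card_le_two

theorem ne_of_mem_extraEnds (hx : Function.Injective x) (hy : Function.Injective y)
    (hxy : ∀ j k, x j ≠ y k) {J : Finset (Fin 3)} {j : Fin 3} (hj : j ∉ J) {c : Fin ℓ}
    (hc : c ∈ extraEnds x y J) : c ≠ x j ∧ c ≠ y j := by
  simp only [extraEnds, Finset.mem_biUnion, Finset.mem_insert, Finset.mem_singleton] at hc
  obtain ⟨k, hk, rfl | rfl⟩ := hc
  · exact ⟨hx.ne (ne_of_mem_of_not_mem hk hj), hxy k j⟩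
  · exact ⟨(hxy j k).symm, hy.ne (ne_of_mem_of_not_mem hk hj)⟩

theorem exists_chain_of_extra_paths (hs : ∀ j, 1 ≤ s j) (hx : Function.Injective x)
    (hy : Function.Injective y) (hxy : ∀ j k, x j ≠ y k) {J : Finset (Fin 3)} (hJ : J.Nonempty) :
    ∃ (a a' : Fin ℓ) (p : (subdivGraph ℓ s x y).Walk (vA a) (vA a')) (SB : Finset (Fin ℓ)),
      a ≠ a' ∧ p.length + 4 = ∑ j ∈ J, (s j + 5) ∧ IsPathWithin p (extraEnds x y J) SB J ∧
      SB.card < J.card := by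
  induction hJ using Finset.Nonempty.cons_induction with
  | singleton j =>
    obtain ⟨p, hlen, hp⟩ := exists_extra_path j (hs j) (hxy j j)
    exact ⟨x j, y j, p, ∅, hxy j j, by simp [hlen], by simpa [extraEnds] using hp, by simp⟩
  | cons j J hj hJ ih =>
    obtain ⟨a, a', p, SB, haa', hlen, hp, hSB⟩ := ih
    have haJ : a ∈ extraEnds x y J := hp.2 _ p.start_mem_support
    have ha := ne_of_mem_extraEnds hx hy hxy hj haJ
    have ha' := ne_of_mem_extraEnds hx hy hxy hj (hp.2 _ p.end_mem_support)
    obtain ⟨b, hb⟩ := Fin.exists_notMem_of_card_lt (S := SB) <| by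
      have := Fintype.card_le_of_injective x hx
      have := Finset.card_le_univ J
      simp only [Fintype.card_fin] at *
      omega
    obtain ⟨e, helen, he⟩ := exists_extra_path j (hs j) (hxy j j)
    obtain ⟨h, hhlen, hh⟩ := exists_hop (s := s) (x := x) (y := y) b ha.2.symm
    have hjunction : ({x j, y j} ∩ {y j, a} : Finset (Fin ℓ)) ⊆ {y j} := by
      have := hxy j j
      intro c
      simp only [Finset.mem_inter, Finset.mem_insert, Finset.mem_singleton]
      grind
    have heh := he.append hh hjunction (Finset.disjoint_empty_left _)
      (Finset.disjoint_empty_right _)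
    refine ⟨x j, a', (e.append h).append p, insert b SB, ha'.1.symm, ?_, ?_, ?_⟩
    · simp only [Walk.length_append, Finset.sum_cons]
      omega
    · refine (heh.append hp (fun c hc => ?_) (by simpa using hb) (by simpa using hj)).mono
        (by rw [extraEnds_cons]; grind) (by grind) (by grind)
      have := ne_of_mem_extraEnds hx hy hxy hj (Finset.mem_inter.mp hc).2
      simp only [Finset.mem_inter, Finset.mem_union, Finset.mem_insert,
        Finset.mem_singleton] at hc ⊢
      grind
    · rw [Finset.card_cons]
      exact (Finset.card_insert_le b SB).trans_lt (by omega)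

theorem exists_isCycle_of_isPathWithin {a a' : Fin ℓ}
    {p : (subdivGraph ℓ s x y).Walk (vA a) (vA a')} (hp : IsPathWithin p SA SB SJ) (h : a ≠ a')
    (t : ℕ) (ht : 1 ≤ t) (hA : SA.card + t + 1 ≤ ℓ) (hB : SB.card + t ≤ ℓ) :
    ∃ c : (subdivGraph ℓ s x y).Walk (vA a) (vA a), c.IsCycle ∧ c.length = p.length + 4 * t := by
  obtain ⟨q, SA', SB', hqlen, hq, hqA, hqB⟩ := exists_grid_path (x := x) (y := y) t ht h.symm hA hB
  refine ⟨p.append q, hp.isCycle_append hq ?_ hqB.symm (Finset.disjoint_empty_right _)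
    (by omega), by simp [hqlen]⟩
  rw [Finset.inter_comm, Finset.pair_comm]
  exact hqA

theorem exists_finset_sum_mod_four (hs : ∀ j, s j = 2 ∨ s j = 4) {r : ℕ} (hr : r % 4 ≠ 0) :
    ∃ J : Finset (Fin 3), J.Nonempty ∧ (∑ j ∈ J, (s j + 5)) % 4 = r % 4 := by
  by_cases hr2 : r % 4 = 2
  · obtain ⟨j, k, hjk, hsjk⟩ := Fintype.exists_ne_map_eq_of_card_lt (fun j => s j = 2) (by simp)
    refine ⟨{j, k}, by simp, ?_⟩
    rw [Finset.sum_pair hjk]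
    have := hs j
    have := hs k
    simp only [eq_iff_iff] at hsjk
    omega
  · by_cases hsingle : ∃ j, (s j + 5) % 4 = r % 4
    · obtain ⟨j, hj⟩ := hsingle
      exact ⟨{j}, by simp, by simpa using hj⟩
    · simp only [not_exists] at hsingle
      refine ⟨Finset.univ, Finset.univ_nonempty, ?_⟩
      rw [Fin.sum_univ_three]
      have := hs 0; have := hs 1; have := hs 2
      have := hsingle 0; have := hsingle 1; have := hsingle 2
      omega

theorem exists_path_length_mod_four (hℓ : 24 ≤ ℓ) (hs : ∀ j, s j = 2 ∨ s j = 4)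
    (hx : Function.Injective x) (hy : Function.Injective y) (hxy : ∀ j k, x j ≠ y k) :
    ∃ (a a' : Fin ℓ) (p : (subdivGraph ℓ s x y).Walk (vA a) (vA a'))
      (SA SB : Finset (Fin ℓ)) (SJ : Finset (Fin 3)), a ≠ a' ∧ IsPathWithin p SA SB SJ ∧
      SA.card ≤ 6 ∧ SB.card ≤ 2 ∧ p.length % 4 = ℓ % 4 ∧ p.length + 4 ≤ ℓ := by
  by_cases h0 : ℓ % 4 = 0
  · have hne : (⟨0, by omega⟩ : Fin ℓ) ≠ ⟨1, by omega⟩ := by simp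
    obtain ⟨p, hlen, hp⟩ := exists_hop (s := s) (x := x) (y := y) ⟨0, by omega⟩ hne
    exact ⟨_, _, p, _, _, _, hne, hp, Finset.card_le_two.trans (by norm_num),
      by simp, by omega, by omega⟩
  obtain ⟨J, hJ, hmod⟩ := exists_finset_sum_mod_four hs h0
  have hs1 : ∀ j, 1 ≤ s j := fun j => by rcases hs j with h | h <;> omega
  obtain ⟨a, a', p, SB, haa', hlen, hp, hSB⟩ := exists_chain_of_extra_paths hs1 hx hy hxy hJ
  have hJ3 : J.card ≤ 3 := by simpa using Finset.card_le_univ J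
  -- the sum is `≡ ℓ (mod 4)` and at most `27`, hence at most `ℓ` as `24 ≤ ℓ`
  have hsum : ∑ j ∈ J, (s j + 5) ≤ 27 := by
    refine (Finset.sum_le_sum_of_subset (Finset.subset_univ J)).trans ?_
    rw [Fin.sum_univ_three]
    have := hs 0; have := hs 1; have := hs 2
    omega
  refine ⟨a, a', p, _, SB, J, haa', hp, ?_, by omega, by omega, by omega⟩
  have := card_extraEnds_le (x := x) (y := y) J
  omega

theorem exists_isCycle_length (hℓ : 24 ≤ ℓ) (hs : ∀ j, s j = 2 ∨ s j = 4)
    (hx : Function.Injective x) (hy : Function.Injective y) (hxy : ∀ j k, x j ≠ y k) :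
    ∃ (v : SubdivVtx ℓ s) (c : (subdivGraph ℓ s x y).Walk v v), c.IsCycle ∧ c.length = ℓ := by
  obtain ⟨a, a', p, SA, SB, SJ, haa', hp, hSA, hSB, hmod, hle⟩ :=
    exists_path_length_mod_four hℓ hs hx hy hxy
  obtain ⟨c, hc, hlen⟩ :=
    exists_isCycle_of_isPathWithin hp haa' ((ℓ - p.length) / 4) (by omega) (by omega) (by omega)
  exact ⟨_, c, hc, by omega⟩

end subdivGraph

theorem stmt9 (ℓ : ℕ) (hℓ : 24 ≤ ℓ) (s : Fin 3 → ℕ) (hs : ∀ j, s j = 2 ∨ s j = 4)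
    (x y : Fin 3 → Fin ℓ)
    (hx : Function.Injective x) (hy : Function.Injective y)
    (hxy : ∀ j k, x j ≠ y k) :
    HasHole (SimpleGraph.fromRel (subdivRel ℓ s x y)) ℓ :=
  ⟨by omega, isIndContained_cycleGraph_of_isContained (by omega)
    subdivGraph.encard_neighborSet_le_two_of_adj <|
    (cycleGraph_isContained_iff (by omega)).mpr (subdivGraph.exists_isCycle_length hℓ hs hx hy hxy)⟩
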